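/- Let f ∈ ℚ_p[x] have Newton polygon with rightmost vertex before the last segment at (i_N, m_N), last segment of slope s_{N+1} with |s_{N+1}| < r, and let g ∈ ℤ_p[x] be p^r-pure of degree d. Then the coefficient c_{d i_N} of x^{d i_N} in f ∘ g satisfies ord_p(c_{d i_N}) = m_N. -/

import Mathlib

/-! The coefficient of `x^(d i_N)` in `f ∘ g` is `∑ i, a_i · [x^(d i_N)] g^i`, and the terms with
`i < i_N` vanish for degree reasons. Purity of `g` bounds its coefficients geometrically, which
gives `ord_p [x^(d j)] g^i ≥ r (i - j)`, with `[x^(d i)] g^i = (lead g)^i` a unit. So the term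
`i = i_N` has valuation exactly `m_N`, while for `i > i_N` the segment bound
`ord_p a_i ≥ s (i - n)` gives valuation at least `m_N + (s + r)(i - i_N) > m_N`, as `|s| < r`.
By the ultrametric inequality the `i_N` term dominates the sum. -/

/-- The lower convex hull of a set of points in `ℝ × (ℝ ∪ {∞})`: the points lying
within the vertical strip spanned by `S` and on or above every affine lower bound of `S`. -/
def LCH (S : Set (ℝ × EReal)) : Set (ℝ × EReal) :=
  {q | (∃ s ∈ S, s.1 ≤ q.1) ∧ (∃ s ∈ S, q.1 ≤ s.1) ∧
    ∀ a b : ℝ, (∀ s ∈ S, ((a * s.1 + b : ℝ) : EReal) ≤ s.2) →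
      ((a * q.1 + b : ℝ) : EReal) ≤ q.2}
open Polynomial

/- The `p`-adic valuation of an element of `ℚ_[p]`, with `ord_p 0 = ∞`. -/
open Classical in
noncomputable def ordp (p : ℕ) [Fact p.Prime] (x : ℚ_[p]) : EReal :=
  if x = 0 then ⊤ else ((x.valuation : ℝ) : EReal)

/-- The points `(i, ord_p a_i)` attached to a polynomial `f = Σ a_i x^i` over `ℚ_[p]`. -/
def NPpts {p : ℕ} [Fact p.Prime] (f : Polynomial ℚ_[p]) : Set (ℝ × EReal) :=
  {q | ∃ i : ℕ, i ≤ f.natDegree ∧ q = ((i : ℝ), ordp p (f.coeff i))}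

/-- The `p`-adic Newton polygon of `f`, as a region in the plane. -/
noncomputable def NP {p : ℕ} [Fact p.Prime] (f : Polynomial ℚ_[p]) : Set (ℝ × EReal) :=
  LCH (NPpts f)

/-- `f` is pure at `p` of slope `s`: its Newton polygon is the single segment from
`(0, ord_p a_0)` to `(natDegree f, ord_p a_0 + s · natDegree f)`. -/
def IsPure {p : ℕ} [Fact p.Prime] (f : Polynomial ℚ_[p]) (s : ℝ) : Prop :=
  f.coeff 0 ≠ 0 ∧
  (∀ i ≤ f.natDegree,
    ((((f.coeff 0).valuation : ℝ) + s * i : ℝ) : EReal) ≤ ordp p (f.coeff i)) ∧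
  ordp p (f.coeff f.natDegree)
    = ((((f.coeff 0).valuation : ℝ) + s * f.natDegree : ℝ) : EReal)

/-- `f` is `p^r`-pure: one segment, `ord_p a_0 = r` and `ord_p a_n = 0`. -/
def IsPrPure {p : ℕ} [Fact p.Prime] (f : Polynomial ℚ_[p]) (r : ℕ) : Prop :=
  1 ≤ f.natDegree ∧ (f.coeff 0).valuation = (r : ℤ) ∧
  IsPure f (-(r : ℝ) / f.natDegree)

section Ultrametric

variable {ι M : Type*} [DecidableEq ι] [SeminormedAddCommGroup M] [IsUltrametricDist M]

lemma IsUltrametricDist.norm_sum_eq_of_forall_norm_lt {s : Finset ι} {f : ι → M} {i₀ : ι}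
    (hi₀ : i₀ ∈ s) (hlt : ∀ i ∈ s, i ≠ i₀ → ‖f i‖ < ‖f i₀‖) :
    ‖∑ i ∈ s, f i‖ = ‖f i₀‖ := by
  rw [← Finset.add_sum_erase s f hi₀]
  rcases (s.erase i₀).eq_empty_or_nonempty with hempty | hne
  · simp [hempty]
  obtain ⟨j, hj, hsum⟩ := IsUltrametricDist.exists_norm_finsetSum_le_of_nonempty hne f
  obtain ⟨hji, hjs⟩ := Finset.mem_erase.mp hj
  have hrest : ‖∑ i ∈ s.erase i₀, f i‖ < ‖f i₀‖ := hsum.trans_lt (hlt j hjs hji)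
  rw [IsUltrametricDist.norm_add_eq_max_of_norm_ne_norm hrest.ne', max_eq_left hrest.le]

end Ultrametric

namespace Polynomial

lemma coeff_comp_eq_sum {R : Type*} [Semiring R] (f g : R[X]) (k : ℕ) :
    (f.comp g).coeff k = ∑ i ∈ Finset.range (f.natDegree + 1), f.coeff i * (g ^ i).coeff k := by
  rw [comp_eq_sum_left, sum_over_range (f := fun e a => C a * g ^ e) f (by simp),
    finsetSum_coeff]
  simp only [coeff_C_mul]

lemma norm_coeff_pow_le {R : Type*} [NormedRing R] [NormOneClass R] [IsUltrametricDist R]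
    {g : R[X]} {A B : ℝ}
    (hA : 0 ≤ A) (hB : 0 ≤ B) (hg : ∀ k, ‖g.coeff k‖ ≤ A * B ^ k) (i j : ℕ) :
    ‖(g ^ i).coeff j‖ ≤ A ^ i * B ^ j := by
  induction i generalizing j with
  | zero =>
    rw [pow_zero, coeff_one]
    split_ifs with hj
    · simp [hj]
    · simpa using pow_nonneg hB j
  | succ i ih =>
    rw [pow_succ, coeff_mul]
    refine IsUltrametricDist.norm_sum_le_of_forall_le_of_nonneg (by positivity) fun x hx => ?_
    rw [← Finset.HasAntidiagonal.mem_antidiagonal.mp hx]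
    calc ‖(g ^ i).coeff x.1 * g.coeff x.2‖
        ≤ ‖(g ^ i).coeff x.1‖ * ‖g.coeff x.2‖ := norm_mul_le _ _
      _ ≤ A ^ i * B ^ x.1 * (A * B ^ x.2) := by gcongr; exacts [ih x.1, hg x.2]
      _ = A ^ (i + 1) * B ^ (x.1 + x.2) := by ring

end Polynomial

section Padic

variable {p : ℕ} [Fact p.Prime]

lemma one_lt_prime_cast : (1 : ℝ) < p := Nat.one_lt_cast.mpr (Fact.out : p.Prime).one_lt

lemma prime_cast_pos : (0 : ℝ) < p := zero_lt_one.trans one_lt_prime_cast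

lemma coe_le_ordp_iff (x : ℚ_[p]) (c : ℝ) :
    (c : EReal) ≤ ordp p x ↔ ‖x‖ ≤ (p : ℝ) ^ (-c) := by
  unfold ordp
  split_ifs with hx
  · simp only [hx, le_top, norm_zero, true_iff]
    positivity
  · rw [EReal.coe_le_coe_iff, Padic.norm_eq_zpow_neg_valuation hx, ← Real.rpow_intCast,
      Real.rpow_le_rpow_left_iff one_lt_prime_cast, Int.cast_neg, neg_le_neg_iff]

lemma ordp_eq_intCast_iff (x : ℚ_[p]) (m : ℤ) :
    ordp p x = ((m : ℝ) : EReal) ↔ ‖x‖ = (p : ℝ) ^ (-(m : ℝ)) := by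
  unfold ordp
  split_ifs with hx
  · simp only [hx, EReal.top_ne_coe, norm_zero, false_iff]
    exact (Real.rpow_pos_of_pos prime_cast_pos _).ne
  · rw [EReal.coe_eq_coe_iff, Padic.norm_eq_zpow_neg_valuation hx, ← Real.rpow_intCast,
      Real.rpow_right_inj prime_cast_pos one_lt_prime_cast.ne',
      Int.cast_neg, neg_inj, Int.cast_inj]

namespace IsPrPure

variable {g : ℚ_[p][X]} {r : ℕ}

lemma norm_leadingCoeff (hg : IsPrPure g r) : ‖g.leadingCoeff‖ = 1 := by
  obtain ⟨hd, hv₀, -, -, htop⟩ := hg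
  have hd₀ : (g.natDegree : ℝ) ≠ 0 := by positivity
  have : ordp p g.leadingCoeff = (((0 : ℤ) : ℝ) : EReal) := by
    rw [leadingCoeff, htop, hv₀]
    congr 1
    field_simp
    push_cast
    ring
  simpa using (ordp_eq_intCast_iff _ 0).mp this

lemma norm_coeff_le (hg : IsPrPure g r) (k : ℕ) :
    ‖g.coeff k‖ ≤ (p : ℝ) ^ (-(r : ℝ)) * ((p : ℝ) ^ ((r : ℝ) / g.natDegree)) ^ k := by
  obtain ⟨-, hv₀, -, hpure, -⟩ := hg
  by_cases hk : k ≤ g.natDegree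
  · have hbound := (coe_le_ordp_iff _ _).mp (hpure k hk)
    rw [hv₀] at hbound
    rw [← Real.rpow_mul_natCast (by positivity), ← Real.rpow_add prime_cast_pos]
    convert hbound using 2
    push_cast
    ring
  · rw [coeff_eq_zero_of_natDegree_lt (not_le.mp hk), norm_zero]
    positivity

lemma norm_coeff_pow_le (hg : IsPrPure g r) (i j : ℕ) :
    ‖(g ^ i).coeff (g.natDegree * j)‖ ≤ (p : ℝ) ^ (-((r : ℝ) * (i - j))) := by
  have hd₀ : (g.natDegree : ℝ) ≠ 0 := by have := hg.1; positivity
  calc ‖(g ^ i).coeff (g.natDegree * j)‖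
      ≤ ((p : ℝ) ^ (-(r : ℝ))) ^ i *
          ((p : ℝ) ^ ((r : ℝ) / g.natDegree)) ^ (g.natDegree * j) :=
        Polynomial.norm_coeff_pow_le (by positivity) (by positivity) hg.norm_coeff_le i _
    _ = (p : ℝ) ^ (-((r : ℝ) * (i - j))) := by
        rw [← Real.rpow_mul_natCast (by positivity), ← Real.rpow_mul_natCast (by positivity),
          ← Real.rpow_add prime_cast_pos]
        congr 1
        push_cast
        field_simp
        ring

lemma norm_coeff_pow_natDegree_mul (hg : IsPrPure g r) (i : ℕ) :
    ‖(g ^ i).coeff (g.natDegree * i)‖ = 1 := by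
  rw [mul_comm, coeff_pow_mul_natDegree, norm_pow, hg.norm_leadingCoeff, one_pow]

end IsPrPure

lemma norm_coeff_mul_coeff_pow_lt {f g : ℚ_[p][X]} {r iN i : ℕ} {m : ℤ} {s : ℝ}
    (hg : IsPrPure g r) (hs : s * (f.natDegree - iN) = -m) (hsr : 0 < s + r) (hi : iN < i)
    (hfi : ((s * (i - f.natDegree) : ℝ) : EReal) ≤ ordp p (f.coeff i)) :
    ‖f.coeff i * (g ^ i).coeff (g.natDegree * iN)‖ < (p : ℝ) ^ (-(m : ℝ)) := by
  have hgap : 0 < (s + r) * (i - iN) := mul_pos hsr (sub_pos.mpr (Nat.cast_lt.mpr hi))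
  calc ‖f.coeff i * (g ^ i).coeff (g.natDegree * iN)‖
      = ‖f.coeff i‖ * ‖(g ^ i).coeff (g.natDegree * iN)‖ := norm_mul _ _
    _ ≤ (p : ℝ) ^ (-(s * (i - f.natDegree))) * (p : ℝ) ^ (-((r : ℝ) * (i - iN))) :=
        mul_le_mul ((coe_le_ordp_iff _ _).mp hfi) (hg.norm_coeff_pow_le i iN) (norm_nonneg _)
          (by positivity)
    _ = (p : ℝ) ^ (-(m + (s + r) * (i - iN))) := by
        rw [← Real.rpow_add prime_cast_pos]
        congr 1
        linear_combination hs
    _ < (p : ℝ) ^ (-(m : ℝ)) := Real.rpow_lt_rpow_of_exponent_lt one_lt_prime_cast (by linarith)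

end Padic

theorem comp_middle_vertex_valuation_general (p : ℕ) [Fact p.Prime] (r : ℕ)
    (f g : Polynomial ℚ_[p])
    (iN : ℕ) (mN : ℤ) (hiN : iN < f.natDegree)
    (hvert : ordp p (f.coeff iN) = (((mN : ℝ)) : EReal))
    (hslope : |(-(mN : ℝ) / ((f.natDegree : ℝ) - (iN : ℝ)))| < r)
    (hseg : ∀ i : ℕ, iN < i → i ≤ f.natDegree →
      ((((-(mN : ℝ) / ((f.natDegree : ℝ) - (iN : ℝ))) * ((i : ℝ) - (f.natDegree : ℝ))) : ℝ)
          : EReal) ≤ ordp p (f.coeff i))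
    (hg : IsPrPure g r) :
    ordp p ((f.comp g).coeff (g.natDegree * iN)) = (((mN : ℝ)) : EReal) := by
  have hs : -(mN : ℝ) / (f.natDegree - iN) * (f.natDegree - iN) = -mN :=
    div_mul_cancel₀ _ (sub_pos.mpr (Nat.cast_lt.mpr hiN)).ne'
  have hsr := neg_lt_iff_pos_add.mp (abs_lt.mp hslope).1
  have hmain :
      ‖f.coeff iN * (g ^ iN).coeff (g.natDegree * iN)‖ = (p : ℝ) ^ (-(mN : ℝ)) := by
    rw [norm_mul, hg.norm_coeff_pow_natDegree_mul, mul_one, ← ordp_eq_intCast_iff, hvert]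
  rw [ordp_eq_intCast_iff, coeff_comp_eq_sum, ← hmain]
  refine IsUltrametricDist.norm_sum_eq_of_forall_norm_lt
    (Finset.mem_range_succ_iff.mpr hiN.le) fun i hi hne => ?_
  rw [hmain]
  rcases hne.lt_or_gt with hlt | hgt
  · have hdeg : (g ^ i).natDegree < g.natDegree * iN :=
      natDegree_pow_le.trans_lt (by rw [mul_comm]; exact Nat.mul_lt_mul_of_pos_left hlt hg.1)
    rw [coeff_eq_zero_of_natDegree_lt hdeg, mul_zero, norm_zero]
    exact Real.rpow_pos_of_pos prime_cast_pos _
  · exact norm_coeff_mul_coeff_pow_lt hg hs hsr hgt (hseg i hgt (Finset.mem_range_succ_iff.mp hi))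

/-- Let `f` be monic with a Newton-polygon vertex at `(i_N, m_N)` and final segment of slope
`s_{N+1} = -m_N/(n - i_N)` with `|s_{N+1}| < r` (so `ord_p a_i ≥ s_{N+1}(i - n)` for
`i > i_N`), and let `g ∈ ℤ_p[x]` be `p^r`-pure of degree `d`. Then the coefficient
`c_{d·i_N}` of `x^{d·i_N}` in `f ∘ g` satisfies `ord_p(c_{d·i_N}) = m_N`. -/
theorem comp_middle_vertex_valuation (p : ℕ) [Fact p.Prime] (r : ℕ) (hr : 1 ≤ r)
    (f g : Polynomial ℚ_[p]) (hmonic : f.Monic)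
    (iN : ℕ) (mN : ℤ) (hiN : iN < f.natDegree)
    (hvert : ordp p (f.coeff iN) = (((mN : ℝ)) : EReal))
    (hslope : |(-(mN : ℝ) / ((f.natDegree : ℝ) - (iN : ℝ)))| < r)
    (hseg : ∀ i : ℕ, iN < i → i ≤ f.natDegree →
      ((((-(mN : ℝ) / ((f.natDegree : ℝ) - (iN : ℝ))) * ((i : ℝ) - (f.natDegree : ℝ))) : ℝ)
          : EReal) ≤ ordp p (f.coeff i))
    (hgint : ∀ i, ‖g.coeff i‖ ≤ 1) (hg : IsPrPure g r) :
    ordp p ((f.comp g).coeff (g.natDegree * iN)) = (((mN : ℝ)) : EReal) :=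
  comp_middle_vertex_valuation_general p r f g iN mN hiN hvert hslope hseg hg
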